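/- Let ψ:ℝ²→ℝ³ be C∞ and let Q = [−1,2]×[−π,3π]. Suppose M_ψ>0 bounds |ψ|, |Dψ|, |D²ψ| and |D³ψ| on Q, and let m_ψ>0, λ>0. Let x̄=(x,θ) and ȳ=(y,σ) be distinct points of Q and assume |Dψ(x̄)ᵀ(ψ(x̄)−ψ(ȳ))| ≥ m_ψ·|x̄−ȳ| and |Dψ(ȳ)ᵀ(ψ(x̄)−ψ(ȳ))| ≥ m_ψ·|x̄−ȳ|. Set p_x̄ := λ·Dψ(x̄)ᵀ(ψ(x̄)−ψ(ȳ)) ∈ ℝ² and p_ȳ := λ·Dψ(ȳ)ᵀ(ψ(x̄)−ψ(ȳ)) ∈ ℝ² (both nonzero), and define I₁ := ⟨ψ(x̄)−ψ(ȳ), D²ψ(x̄)[e^{−x}·p̂_x̄⊥, e^{−x}·p̂_x̄⊥] − D²ψ(ȳ)[e^{−y}·p̂_ȳ⊥, e^{−y}·p̂_ȳ⊥]⟩ ∈ ℝ. Then |I₁| ≤ C̄₁·|x̄−ȳ|² for a constant C̄₁ depending only on m_ψ and M_ψ. -/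

import Mathlib

open Set Real Filter
open scoped ContDiff

/-- Euclidean norm on `ℝ²`. -/
noncomputable def norm2 (p : ℝ × ℝ) : ℝ := Real.sqrt (p.1 ^ 2 + p.2 ^ 2)

/-- Euclidean norm on `ℝ³ = ℝ × ℝ²`. -/
noncomputable def norm3 (p : ℝ × ℝ × ℝ) : ℝ := Real.sqrt (p.1 ^ 2 + p.2.1 ^ 2 + p.2.2 ^ 2)

/-- Euclidean scalar product on `ℝ³ = ℝ × ℝ²`. -/
def dot3 (a b : ℝ × ℝ × ℝ) : ℝ := a.1 * b.1 + a.2.1 * b.2.1 + a.2.2 * b.2.2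

/-- Rotation by `π/2`: `q⊥ = (-q₂, q₁)`. -/
def perp2 (q : ℝ × ℝ) : ℝ × ℝ := (-q.2, q.1)

/-- Normalization `q̂ = q/|q|`. -/
noncomputable def hat2 (q : ℝ × ℝ) : ℝ × ℝ := (norm2 q)⁻¹ • q

/-- `Dψ(z)ᵀ v`: the adjoint (with respect to the Euclidean scalar products) of the
differential of `ψ` at `z`, applied to `v ∈ ℝ³`. -/
noncomputable def DpsiT (ψ : ℝ × ℝ → ℝ × ℝ × ℝ) (z : ℝ × ℝ) (v : ℝ × ℝ × ℝ) : ℝ × ℝ :=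
  (dot3 (fderiv ℝ ψ z (1, 0)) v, dot3 (fderiv ℝ ψ z (0, 1)) v)

/-- `D²ψ(z)[ξ,ξ] ∈ ℝ³`: the second differential of `ψ` at `z` evaluated on `(ξ,ξ)`. -/
noncomputable def D2psi (ψ : ℝ × ℝ → ℝ × ℝ × ℝ) (z ξ : ℝ × ℝ) : ℝ × ℝ × ℝ :=
  fderiv ℝ (fun w => fderiv ℝ ψ w ξ) z ξ

/-- The compact rectangle `Q = [−1,2] × [−π,3π]`. -/
def Qrect : Set (ℝ × ℝ) := Set.Icc (-1 : ℝ) 2 ×ˢ Set.Icc (-π) (3 * π)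

/-! The two directions are unit vectors rotated by `π/2` and rescaled by `e^{-x} ≤ e`.
Normalisation is Lipschitz away from `0` with constant `2/|p|`, and
`|p_x̄ − p_ȳ| ≲ λ M_ψ² |x̄ − ȳ|²` while `|p_x̄| ≥ λ m_ψ |x̄ − ȳ|`, so the directions are
`O(|x̄ − ȳ|)`-close. Hence `D²ψ(x̄)[ξ,ξ] − D²ψ(ȳ)[η,η] = O(|x̄ − ȳ|)`, and it is paired with
`ψ(x̄) − ψ(ȳ) = O(|x̄ − ȳ|)`.

The operator norms in the hypotheses are taken for the sup norm on `ℝ × ℝ`, which is dominated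
by `norm2`; this only costs numerical factors. -/

namespace NormedSpace

variable {V : Type*} [NormedAddCommGroup V] [NormedSpace ℝ V]

theorem norm_normalize_le (x : V) : ‖normalize x‖ ≤ 1 := by
  rcases eq_or_ne x 0 with rfl | hx
  · simp
  · exact (norm_normalize hx).le

theorem norm_normalize_sub_normalize_le {x : V} (hx : x ≠ 0) (y : V) :
    ‖normalize x - normalize y‖ ≤ 2 * ‖x - y‖ / ‖x‖ := by
  have hx' : 0 < ‖x‖ := norm_pos_iff.2 hx
  have key : ‖x‖ • (normalize x - normalize y) = (x - y) + (‖y‖ - ‖x‖) • normalize y := by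
    rw [smul_sub, norm_smul_normalize, sub_smul, norm_smul_normalize]
    abel
  rw [le_div_iff₀ hx', mul_comm, ← abs_of_pos hx', ← Real.norm_eq_abs, ← norm_smul, key]
  calc ‖(x - y) + (‖y‖ - ‖x‖) • normalize y‖
      ≤ ‖x - y‖ + |‖y‖ - ‖x‖| * 1 := by
        refine (norm_add_le _ _).trans (add_le_add_right ?_ _)
        rw [norm_smul, Real.norm_eq_abs]
        gcongr
        exact norm_normalize_le y
    _ ≤ 2 * ‖x - y‖ := by
        rw [mul_one, abs_sub_comm, two_mul]
        gcongr
        exact abs_norm_sub_norm_le x y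

end NormedSpace

theorem ContinuousLinearMap.norm_apply_apply_sub_apply_apply_le {E F : Type*}
    [NormedAddCommGroup E] [NormedSpace ℝ E] [NormedAddCommGroup F] [NormedSpace ℝ F]
    (H H' : E →L[ℝ] E →L[ℝ] F) (ξ η : E) :
    ‖H ξ ξ - H' η η‖ ≤ ‖H - H'‖ * ‖ξ‖ * ‖ξ‖ + ‖H'‖ * (‖ξ‖ + ‖η‖) * ‖ξ - η‖ := by
  have key : H ξ ξ - H' η η = (H - H') ξ ξ + (H' (ξ - η) ξ + H' η (ξ - η)) := by
    simp only [sub_apply, map_sub]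
    abel
  have h1 := le_opNorm₂ H' (ξ - η) ξ
  have h2 := le_opNorm₂ H' η (ξ - η)
  rw [key]
  refine (norm_add_le _ _).trans (add_le_add (le_opNorm₂ _ _ _) ?_)
  refine (norm_add_le _ _).trans ?_
  linarith

lemma norm2_eq_norm_toLp (p : ℝ × ℝ) : norm2 p = ‖WithLp.toLp 2 p‖ := by
  simp [norm2, WithLp.prod_norm_eq_of_L2]

lemma toLp_hat2 (q : ℝ × ℝ) :
    WithLp.toLp 2 (hat2 q) = NormedSpace.normalize (WithLp.toLp 2 q) := by
  simp [hat2, NormedSpace.normalize, norm2_eq_norm_toLp]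

lemma norm2_nonneg (p : ℝ × ℝ) : 0 ≤ norm2 p := Real.sqrt_nonneg _

lemma norm2_pos_iff {p : ℝ × ℝ} : 0 < norm2 p ↔ p ≠ 0 := by
  simp [norm2_eq_norm_toLp]

lemma norm_le_norm2 (p : ℝ × ℝ) : ‖p‖ ≤ norm2 p := by
  rw [Prod.norm_def, norm2]
  exact max_le (Real.abs_le_sqrt (by nlinarith)) (Real.abs_le_sqrt (by nlinarith))

lemma norm2_le_two_mul_norm (p : ℝ × ℝ) : norm2 p ≤ 2 * ‖p‖ := by
  have h1 : |p.1| ≤ ‖p‖ := norm_fst_le p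
  have h2 : |p.2| ≤ ‖p‖ := norm_snd_le p
  rw [norm2, Real.sqrt_le_left (by positivity)]
  nlinarith [sq_abs p.1, sq_abs p.2, abs_nonneg p.1, abs_nonneg p.2]

lemma norm2_smul (c : ℝ) (p : ℝ × ℝ) : norm2 (c • p) = |c| * norm2 p := by
  simp [norm2_eq_norm_toLp, norm_smul]

lemma norm2_add_le (p q : ℝ × ℝ) : norm2 (p + q) ≤ norm2 p + norm2 q := by
  simpa [norm2_eq_norm_toLp] using norm_add_le _ _

lemma norm2_hat2_le_one (q : ℝ × ℝ) : norm2 (hat2 q) ≤ 1 := by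
  rw [norm2_eq_norm_toLp, toLp_hat2]
  exact NormedSpace.norm_normalize_le _

lemma hat2_smul_of_pos {c : ℝ} (hc : 0 < c) (q : ℝ × ℝ) : hat2 (c • q) = hat2 q := by
  apply WithLp.toLp_injective 2
  simp only [toLp_hat2, WithLp.toLp_smul, NormedSpace.normalize_smul_of_pos hc]

lemma norm2_hat2_sub_le {p : ℝ × ℝ} (hp : p ≠ 0) (q : ℝ × ℝ) :
    norm2 (hat2 p - hat2 q) ≤ 2 * norm2 (p - q) / norm2 p := by
  simp only [norm2_eq_norm_toLp, WithLp.toLp_sub, toLp_hat2]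
  exact NormedSpace.norm_normalize_sub_normalize_le (by simpa using hp) _

lemma perp2_smul (c : ℝ) (q : ℝ × ℝ) : perp2 (c • q) = c • perp2 q := by
  simp [perp2]

lemma perp2_sub (p q : ℝ × ℝ) : perp2 (p - q) = perp2 p - perp2 q := by
  simp [perp2, neg_add_eq_sub]

lemma norm2_perp2 (q : ℝ × ℝ) : norm2 (perp2 q) = norm2 q := by
  simp [norm2, perp2, add_comm]

lemma abs_dot3_le (a b : ℝ × ℝ × ℝ) : |dot3 a b| ≤ 3 * ‖a‖ * ‖b‖ := by
  have h : ∀ {x y : ℝ}, |x| ≤ ‖a‖ → |y| ≤ ‖b‖ → |x * y| ≤ ‖a‖ * ‖b‖ := fun hx hy => by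
    rw [abs_mul]; exact mul_le_mul hx hy (abs_nonneg _) (norm_nonneg _)
  have h1 := h (norm_fst_le a) (norm_fst_le b)
  have h2 := h ((norm_fst_le a.2).trans (norm_snd_le a)) ((norm_fst_le b.2).trans (norm_snd_le b))
  have h3 := h ((norm_snd_le a.2).trans (norm_snd_le a)) ((norm_snd_le b.2).trans (norm_snd_le b))
  calc |dot3 a b| ≤ |a.1 * b.1| + |a.2.1 * b.2.1| + |a.2.2 * b.2.2| := abs_add_three _ _ _
    _ ≤ 3 * ‖a‖ * ‖b‖ := by linarith

lemma dot3_sub_left (a a' b : ℝ × ℝ × ℝ) : dot3 (a - a') b = dot3 a b - dot3 a' b := by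
  simp only [dot3, Prod.fst_sub, Prod.snd_sub]
  ring

lemma norm2_DpsiT_sub_DpsiT_le (ψ : ℝ × ℝ → ℝ × ℝ × ℝ) (x y : ℝ × ℝ) (v : ℝ × ℝ × ℝ) :
    norm2 (DpsiT ψ x v - DpsiT ψ y v) ≤ 6 * ‖fderiv ℝ ψ x - fderiv ℝ ψ y‖ * ‖v‖ := by
  have hcomp : ∀ u : ℝ × ℝ, ‖u‖ = 1 →
      ‖dot3 (fderiv ℝ ψ x u) v - dot3 (fderiv ℝ ψ y u) v‖ ≤
        3 * ‖fderiv ℝ ψ x - fderiv ℝ ψ y‖ * ‖v‖ := by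
    intro u hu
    have hA := (fderiv ℝ ψ x - fderiv ℝ ψ y).le_opNorm u
    rw [hu, mul_one, sub_apply] at hA
    rw [← dot3_sub_left, Real.norm_eq_abs]
    refine (abs_dot3_le _ _).trans ?_
    gcongr
  have hmax : ‖DpsiT ψ x v - DpsiT ψ y v‖ ≤ 3 * ‖fderiv ℝ ψ x - fderiv ℝ ψ y‖ * ‖v‖ :=
    norm_prod_le_iff.2 ⟨hcomp _ (by simp), hcomp _ (by simp)⟩
  linarith [norm2_le_two_mul_norm (DpsiT ψ x v - DpsiT ψ y v)]

lemma abs_exp_neg_sub_exp_neg_le {s t : ℝ} (hs : -1 ≤ s) (ht : -1 ≤ t) :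
    |exp (-s) - exp (-t)| ≤ exp 1 * |s - t| := by
  wlog hst : s ≤ t generalizing s t
  · rw [abs_sub_comm, abs_sub_comm s]
    exact this ht hs (le_of_not_ge hst)
  have hsplit : exp (-t) = exp (-s) * exp (s - t) := by rw [← exp_add]; ring_nf
  have hlin := add_one_le_exp (s - t)
  have hexp : exp (s - t) ≤ 1 := exp_le_one_iff.2 (by linarith)
  have hbound : exp (-s) ≤ exp 1 := exp_le_exp.2 (by linarith)
  have hpos := exp_pos (-s)
  rw [hsplit, abs_of_nonneg (by nlinarith), abs_of_nonpos (by linarith)]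
  nlinarith

lemma norm2_exp_smul_hat2_le {s : ℝ} (hs : -1 ≤ s) (q : ℝ × ℝ) :
    norm2 (exp (-s) • hat2 q) ≤ exp 1 := by
  rw [norm2_smul, abs_of_pos (exp_pos _)]
  exact (mul_le_of_le_one_right (exp_pos _).le (norm2_hat2_le_one q)).trans
    (exp_le_exp.2 (by linarith))

lemma norm2_exp_smul_hat2_sub_le {s t : ℝ} (hs : -1 ≤ s) (ht : -1 ≤ t) {p : ℝ × ℝ}
    (hp : p ≠ 0) (q : ℝ × ℝ) :
    norm2 (exp (-s) • hat2 p - exp (-t) • hat2 q) ≤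
      exp 1 * (2 * norm2 (p - q) / norm2 p + |s - t|) := by
  have hsplit : exp (-s) • hat2 p - exp (-t) • hat2 q =
      exp (-s) • (hat2 p - hat2 q) + (exp (-s) - exp (-t)) • hat2 q := by
    rw [smul_sub, sub_smul]
    abel
  have h1 : norm2 (exp (-s) • (hat2 p - hat2 q)) ≤ exp 1 * (2 * norm2 (p - q) / norm2 p) := by
    rw [norm2_smul, abs_of_pos (exp_pos _)]
    exact mul_le_mul (exp_le_exp.2 (by linarith)) (norm2_hat2_sub_le hp q) (norm2_nonneg _)
      (exp_pos _).le
  have h2 : norm2 ((exp (-s) - exp (-t)) • hat2 q) ≤ exp 1 * |s - t| := by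
    rw [norm2_smul]
    exact (mul_le_of_le_one_right (abs_nonneg _) (norm2_hat2_le_one q)).trans
      (abs_exp_neg_sub_exp_neg_le hs ht)
  rw [hsplit, mul_add]
  exact (norm2_add_le _ _).trans (add_le_add h1 h2)

lemma D2psi_eq_fderiv_fderiv_apply {ψ : ℝ × ℝ → ℝ × ℝ × ℝ} {z : ℝ × ℝ}
    (h : DifferentiableAt ℝ (fderiv ℝ ψ) z) (ξ : ℝ × ℝ) :
    D2psi ψ z ξ = fderiv ℝ (fderiv ℝ ψ) z ξ ξ := by
  rw [D2psi, fderiv_clm_apply h (differentiableAt_const ξ)]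
  simp

lemma norm_D2psi_sub_D2psi_le {ψ : ℝ × ℝ → ℝ × ℝ × ℝ}
    (hψ : Differentiable ℝ (fderiv ℝ ψ)) (x y ξ η : ℝ × ℝ) :
    ‖D2psi ψ x ξ - D2psi ψ y η‖ ≤
      ‖fderiv ℝ (fderiv ℝ ψ) x - fderiv ℝ (fderiv ℝ ψ) y‖ * ‖ξ‖ * ‖ξ‖ +
        ‖fderiv ℝ (fderiv ℝ ψ) y‖ * (‖ξ‖ + ‖η‖) * ‖ξ - η‖ := by
  rw [D2psi_eq_fderiv_fderiv_apply (hψ x), D2psi_eq_fderiv_fderiv_apply (hψ y)]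
  exact ContinuousLinearMap.norm_apply_apply_sub_apply_apply_le _ _ _ _

lemma Convex.norm_image_sub_le_mul_norm2 {F : Type*} [NormedAddCommGroup F] [NormedSpace ℝ F]
    {s : Set (ℝ × ℝ)} (hs : Convex ℝ s) {f : ℝ × ℝ → F} (hf : Differentiable ℝ f) {M : ℝ}
    (hM : ∀ z ∈ s, ‖fderiv ℝ f z‖ ≤ M) {x y : ℝ × ℝ} (hx : x ∈ s) (hy : y ∈ s) :
    ‖f x - f y‖ ≤ M * norm2 (x - y) := by
  have hM0 : 0 ≤ M := (norm_nonneg _).trans (hM x hx)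
  exact (hs.norm_image_sub_le_of_norm_fderiv_le (fun z _ => hf z) hM hy hx).trans
    (mul_le_mul_of_nonneg_left (norm_le_norm2 _) hM0)

lemma convex_Qrect : Convex ℝ Qrect := (convex_Icc _ _).prod (convex_Icc _ _)

lemma norm2_direction_sub_le {ψ : ℝ × ℝ → ℝ × ℝ × ℝ} {m M lam : ℝ} (hm : 0 < m)
    (hlam : 0 < lam) {x y : ℝ × ℝ} (hx : -1 ≤ x.1) (hy : -1 ≤ y.1) (hne : x ≠ y)
    (hw : ‖ψ x - ψ y‖ ≤ M * norm2 (x - y))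
    (hD : ‖fderiv ℝ ψ x - fderiv ℝ ψ y‖ ≤ M * norm2 (x - y))
    (ha : m * norm2 (x - y) ≤ norm2 (DpsiT ψ x (ψ x - ψ y))) :
    norm2 (exp (-x.1) • hat2 (perp2 (lam • DpsiT ψ x (ψ x - ψ y))) -
        exp (-y.1) • hat2 (perp2 (lam • DpsiT ψ y (ψ x - ψ y)))) ≤
      exp 1 * (12 * M ^ 2 / m + 1) * norm2 (x - y) := by
  set L := norm2 (x - y)
  set a := DpsiT ψ x (ψ x - ψ y)
  set b := DpsiT ψ y (ψ x - ψ y)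
  have hL : 0 < L := norm2_pos_iff.2 (sub_ne_zero.2 hne)
  have hML : 0 ≤ M * L := (norm_nonneg _).trans hw
  have hab : norm2 (a - b) ≤ 6 * M ^ 2 * L ^ 2 :=
    calc norm2 (a - b) ≤ 6 * ‖fderiv ℝ ψ x - fderiv ℝ ψ y‖ * ‖ψ x - ψ y‖ :=
          norm2_DpsiT_sub_DpsiT_le ψ x y _
      _ ≤ 6 * (M * L) * (M * L) := by gcongr
      _ = 6 * M ^ 2 * L ^ 2 := by ring
  have hst : |x.1 - y.1| ≤ L := (norm_fst_le (x - y)).trans (norm_le_norm2 _)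
  have hp : perp2 a ≠ 0 := by
    rw [← norm2_pos_iff, norm2_perp2]
    exact (mul_pos hm hL).trans_le ha
  rw [perp2_smul, hat2_smul_of_pos hlam, perp2_smul, hat2_smul_of_pos hlam, mul_assoc]
  refine (norm2_exp_smul_hat2_sub_le hx hy hp _).trans ?_
  rw [← perp2_sub, norm2_perp2, norm2_perp2]
  gcongr
  calc 2 * norm2 (a - b) / norm2 a + |x.1 - y.1|
      ≤ 2 * (6 * M ^ 2 * L ^ 2) / (m * L) + L := by gcongr
    _ = (12 * M ^ 2 / m + 1) * L := by field_simp; ring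

theorem estimate_I1 :
    ∃ C1 : ℝ → ℝ → ℝ, ∀ mψ Mψ : ℝ, 0 < mψ → 0 < Mψ →
      0 < C1 mψ Mψ ∧
      ∀ ψ : ℝ × ℝ → ℝ × ℝ × ℝ, ContDiff ℝ ∞ ψ →
        (∀ z ∈ Qrect, norm3 (ψ z) ≤ Mψ ∧ ‖fderiv ℝ ψ z‖ ≤ Mψ ∧
          ‖fderiv ℝ (fderiv ℝ ψ) z‖ ≤ Mψ ∧
          @norm _ ContinuousLinearMap.hasOpNorm (fderiv ℝ (fderiv ℝ (fderiv ℝ ψ)) z) ≤ Mψ) →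
        ∀ lam : ℝ, 0 < lam → ∀ xb yb : ℝ × ℝ, xb ∈ Qrect → yb ∈ Qrect → xb ≠ yb →
          mψ * norm2 (xb - yb) ≤ norm2 (DpsiT ψ xb (ψ xb - ψ yb)) →
          mψ * norm2 (xb - yb) ≤ norm2 (DpsiT ψ yb (ψ xb - ψ yb)) →
          |dot3 (ψ xb - ψ yb)
              (D2psi ψ xb
                  (Real.exp (-xb.1) • hat2 (perp2 (lam • DpsiT ψ xb (ψ xb - ψ yb)))) -
                D2psi ψ yb
                  (Real.exp (-yb.1) • hat2 (perp2 (lam • DpsiT ψ yb (ψ xb - ψ yb)))))| ≤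
            C1 mψ Mψ * norm2 (xb - yb) ^ 2 := by
  refine ⟨fun m M => 3 * M ^ 2 * exp 1 ^ 2 * (3 + 24 * M ^ 2 / m),
    fun mψ Mψ hm hM => ⟨by positivity, ?_⟩⟩
  intro ψ hψ hbound lam hlam xb yb hx hy hne hax _
  have hψ1 : ContDiff ℝ ∞ (fderiv ℝ ψ) := hψ.fderiv_right le_rfl
  have hψ2 : ContDiff ℝ ∞ (fderiv ℝ (fderiv ℝ ψ)) := hψ1.fderiv_right le_rfl
  have hw := convex_Qrect.norm_image_sub_le_mul_norm2 (hψ.differentiable (by simp))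
    (fun z hz => (hbound z hz).2.1) hx hy
  have hD := convex_Qrect.norm_image_sub_le_mul_norm2 (hψ1.differentiable (by simp))
    (fun z hz => (hbound z hz).2.2.1) hx hy
  have hH := convex_Qrect.norm_image_sub_le_mul_norm2 (hψ2.differentiable (by simp))
    (fun z hz => (hbound z hz).2.2.2) hx hy
  have hdir := norm2_direction_sub_le hm hlam hx.1.1 hy.1.1 hne hw hD hax
  have hHy : ‖fderiv ℝ (fderiv ℝ ψ) yb‖ ≤ Mψ := (hbound yb hy).2.2.1
  have hL := norm2_nonneg (xb - yb)
  calc _ ≤ 3 * ‖ψ xb - ψ yb‖ * ‖D2psi ψ xb _ - D2psi ψ yb _‖ := abs_dot3_le _ _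
    _ ≤ 3 * (Mψ * norm2 (xb - yb)) * (Mψ * norm2 (xb - yb) * exp 1 * exp 1 +
          Mψ * (exp 1 + exp 1) * (exp 1 * (12 * Mψ ^ 2 / mψ + 1) * norm2 (xb - yb))) := by
        gcongr
        refine (norm_D2psi_sub_D2psi_le (hψ1.differentiable (by simp)) _ _ _ _).trans ?_
        gcongr <;> refine (norm_le_norm2 _).trans ?_
        exacts [norm2_exp_smul_hat2_le hx.1.1 _, norm2_exp_smul_hat2_le hx.1.1 _,
          norm2_exp_smul_hat2_le hx.1.1 _, norm2_exp_smul_hat2_le hy.1.1 _, hdir]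
    _ = 3 * Mψ ^ 2 * exp 1 ^ 2 * (3 + 24 * Mψ ^ 2 / mψ) * norm2 (xb - yb) ^ 2 := by ring
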